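/- arXiv:2601.22649 — 3 statements merged into one kernel-verified Lean document; each statement's English description precedes it below -/
import Mathlib

section
/- For n ≥ 1, the number of classes of objects of the category of contravariant representations of {1,…,n} over F₂ with finite-dimensional values that are closed under isomorphism, contain the zero object, and are closed under finite direct sums, subobjects, and quotient objects equals the (n+1)-th Catalan number C_{n+1} = (1/(n+2))·binom(2n+2, n+1). -/
open CategoryTheory CategoryTheory.Limits

noncomputable section

abbrev F2 : Type := ZMod 2

/-- The abelian category of contravariant representations of `{1,…,n}` over `F₂`. -/
abbrev RepCat (n : ℕ) := (Fin n)ᵒᵖ ⥤ ModuleCat.{0} F2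

/-- Representations all of whose values are finite dimensional. -/
def FinDimRep (n : ℕ) := {X : RepCat n // ∀ i : (Fin n)ᵒᵖ, FiniteDimensional F2 (X.obj i)}

variable {n : ℕ}

/-- The class `S` is closed under isomorphism. -/
def IsoClosed (S : Set (FinDimRep n)) : Prop :=
  ∀ X Y : FinDimRep n, Nonempty (X.1 ≅ Y.1) → X ∈ S → Y ∈ S

/-- The class `S` contains the zero object. -/
def ContainsZero (S : Set (FinDimRep n)) : Prop :=
  ∀ X : FinDimRep n, IsZero X.1 → X ∈ S

/-- The class `S` is closed under finite direct sums. -/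
def SumClosed (S : Set (FinDimRep n)) : Prop :=
  ∀ X Y Z : FinDimRep n, X ∈ S → Y ∈ S → Nonempty (Z.1 ≅ X.1 ⊞ Y.1) → Z ∈ S

/-- The class `S` is closed under direct summands. -/
def SummandClosed (S : Set (FinDimRep n)) : Prop :=
  ∀ X Y Z : FinDimRep n, Z ∈ S → Nonempty (Z.1 ≅ X.1 ⊞ Y.1) → X ∈ S ∧ Y ∈ S

/-- The class `S` is closed under subobjects. -/
def SubClosed (S : Set (FinDimRep n)) : Prop :=
  ∀ X Y : FinDimRep n, Y ∈ S → (∃ f : X.1 ⟶ Y.1, Mono f) → X ∈ S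

/-- The class `S` is closed under quotient objects. -/
def QuotClosed (S : Set (FinDimRep n)) : Prop :=
  ∀ X Y : FinDimRep n, X ∈ S → (∃ f : X.1 ⟶ Y.1, Epi f) → Y ∈ S

/-- The class `S` is closed under extensions: the middle term of a short exact
sequence whose outer terms lie in `S` again lies in `S`. -/
def ExtClosed (S : Set (FinDimRep n)) : Prop :=
  ∀ X Y Z : FinDimRep n, X ∈ S → Z ∈ S →
    (∃ (f : X.1 ⟶ Y.1) (g : Y.1 ⟶ Z.1) (w : f ≫ g = 0),
      (ShortComplex.mk f g w).ShortExact) → Y ∈ S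

/-- The class `S` is closed under kernels of morphisms between its objects. -/
def KerClosed (S : Set (FinDimRep n)) : Prop :=
  ∀ X Y K : FinDimRep n, X ∈ S → Y ∈ S →
    (∃ f : X.1 ⟶ Y.1, Nonempty (K.1 ≅ kernel f)) → K ∈ S

/-- The class `S` is closed under cokernels of morphisms between its objects. -/
def CokerClosed (S : Set (FinDimRep n)) : Prop :=
  ∀ X Y C : FinDimRep n, X ∈ S → Y ∈ S →
    (∃ f : X.1 ⟶ Y.1, Nonempty (C.1 ≅ cokernel f)) → C ∈ S

/-!
A class `S` with these closure properties is determined by the interval modules `[a, b]` it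
contains, and these form an ideal `T` of the containment order on intervals. If the structure map
`X b → X a` of some `X ∈ S` is nonzero, a vector `v ∈ X b` surviving to `a` generates a
subrepresentation `[a₀, b] ⊆ X` with `a₀ ≤ a`, which maps onto `[a, b]`. Conversely, if all
structure maps of `X` along intervals outside `T` vanish, the cyclic subrepresentations generated
by a finite spanning family are interval modules from `T`, and `X` is a quotient of their direct
sum. So `S ↦ T` is a bijection onto ideals of intervals.

An ideal `T` is determined by its column lengths `f b = #{a | [a, b] ∈ T}`, and these are exactly
the sequences with `f 0 ≤ 1` and `f (b + 1) ≤ f b + 1`. Splitting off the first term, the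
sequences of length `n` with `f 0 ≤ h + 1` are counted by the coefficient of `xⁿ` in
`C(x) ^ (h + 2)`, because `C = 1 + x C²` for the Catalan series `C`; for `h = 0` this coefficient
is `C_{n+1}`.
-/

universe u v

section IntervalModule

variable (K : Type u) [Field K] {ι : Type v} [LinearOrder ι]

def indicatorSubmodule (P : Prop) : Submodule K K where
  carrier := {x | ¬P → x = 0}
  add_mem' ha hb hP := by rw [ha hP, hb hP, add_zero]
  zero_mem' _ := rfl
  smul_mem' c _ hx hP := by rw [hx hP, smul_zero]

variable {K}

lemma indicatorSubmodule.eq_zero {P : Prop} (x : indicatorSubmodule K P) (hP : ¬P) :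
    (x : K) = 0 :=
  x.2 hP

open Classical in
def indicatorSubmodule.restrict (P Q : Prop) :
    indicatorSubmodule K P →ₗ[K] indicatorSubmodule K Q where
  toFun x := ⟨if Q then x else 0, fun hQ => if_neg hQ⟩
  map_add' x y := by ext; split_ifs <;> simp
  map_smul' c x := by ext; split_ifs <;> simp

open Classical in
@[simp]
lemma indicatorSubmodule.coe_restrict (P Q : Prop) (x : indicatorSubmodule K P) :
    (restrict P Q x : K) = if Q then (x : K) else 0 :=
  rfl

variable (K)

def intervalModule (s : Set ι) [s.OrdConnected] : ιᵒᵖ ⥤ ModuleCat.{u} K where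
  obj i := ModuleCat.of K (indicatorSubmodule K (i.unop ∈ s))
  map {i j} _ := ModuleCat.ofHom (indicatorSubmodule.restrict _ _)
  map_id i := by
    ext x
    by_cases hi : i.unop ∈ s
    · simp [hi]
    · simp [hi, indicatorSubmodule.eq_zero x hi]
  map_comp {i j k} f g := by
    ext x
    have hji : j.unop ≤ i.unop := leOfHom f.unop
    have hkj : k.unop ≤ j.unop := leOfHom g.unop
    by_cases hi : i.unop ∈ s
    · by_cases hk : k.unop ∈ s
      · simp [hk, Set.OrdConnected.out ‹_› hk hi ⟨hkj, hji⟩]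
      · simp [hk]
    · simp [indicatorSubmodule.eq_zero x hi]

variable {K}

open Classical in
lemma intervalModule_map_apply (s : Set ι) [s.OrdConnected] {i j : ιᵒᵖ} (f : i ⟶ j)
    (x : (intervalModule K s).obj i) :
    ((intervalModule K s).map f x).1 = if j.unop ∈ s then x.1 else 0 :=
  rfl

lemma intervalModule_map_eq_zero_iff (s : Set ι) [s.OrdConnected] {i j : ιᵒᵖ} (f : i ⟶ j) :
    (intervalModule K s).map f = 0 ↔ ¬(i.unop ∈ s ∧ j.unop ∈ s) := by
  constructor
  · rintro h ⟨hi, hj⟩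
    have := intervalModule_map_apply (K := K) s f ⟨1, fun h => (h hi).elim⟩
    rw [h, if_pos hj] at this
    exact one_ne_zero this.symm
  · intro h
    refine ModuleCat.hom_ext (LinearMap.ext fun x => Subtype.ext ?_)
    refine (intervalModule_map_apply s f x).trans ?_
    by_cases hi : i.unop ∈ s
    · exact if_neg fun hj => h ⟨hi, hj⟩
    · rw [indicatorSubmodule.eq_zero x hi, ite_self]
      rfl

lemma intervalModule_Icc_map_eq_zero_iff {a b c d : ι} (hcd : c ≤ d) :
    (intervalModule K (Set.Icc a b)).map (homOfLE hcd).op = 0 ↔ ¬(a ≤ c ∧ d ≤ b) := by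
  rw [intervalModule_map_eq_zero_iff]
  exact not_congr ⟨fun h => ⟨h.2.1, h.1.2⟩,
    fun h => ⟨⟨h.1.trans hcd, h.2⟩, ⟨h.1, hcd.trans h.2⟩⟩⟩

end IntervalModule

section Lift

open Opposite Set

variable {K : Type u} [Field K] {ι : Type v} [LinearOrder ι] (X : ιᵒᵖ ⥤ ModuleCat.{u} K)
  {b : ι} (v : X.obj (op b))

def orbit (i : ι) : X.obj (op i) :=
  if h : i ≤ b then X.map (homOfLE h).op v else 0

variable {X v}

lemma orbit_of_le {i : ι} (h : i ≤ b) : orbit X v i = X.map (homOfLE h).op v :=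
  dif_pos h

lemma orbit_of_not_le {i : ι} (h : ¬i ≤ b) : orbit X v i = 0 :=
  dif_neg h

lemma orbit_self : orbit X v b = v := by
  rw [orbit_of_le le_rfl]
  exact ConcreteCategory.congr_hom (X.map_id _) v

lemma map_orbit {i j : ι} (f : op i ⟶ op j) (hi : i ≤ b) :
    X.map f (orbit X v i) = orbit X v j := by
  have hji : j ≤ i := leOfHom f.unop
  rw [orbit_of_le hi, orbit_of_le (hji.trans hi), ← ConcreteCategory.comp_apply, ← X.map_comp]
  rfl

lemma orbit_ne_zero_of_le {i j : ι} (hji : j ≤ i) (hi : i ≤ b) (hj : orbit X v j ≠ 0) :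
    orbit X v i ≠ 0 := by
  intro h
  rw [← map_orbit (homOfLE hji).op hi, h, map_zero] at hj
  exact hj rfl

variable (X v)

def intervalModule.lift (a : ι) (hv : ∀ i < a, orbit X v i = 0) :
    intervalModule K (Icc a b) ⟶ X where
  app i := ModuleCat.ofHom ((indicatorSubmodule K _).subtype.smulRight (orbit X v i.unop))
  naturality {i j} f := by
    ext x
    change ((intervalModule K (Icc a b)).map f x).1 • orbit X v j.unop =
      X.map f (x.1 • orbit X v i.unop)
    rw [intervalModule_map_apply]
    by_cases hi : i.unop ∈ Icc a b
    · rw [map_smul, map_orbit f hi.2]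
      by_cases hj : j.unop ∈ Icc a b
      · rw [if_pos hj]
      · have hja : j.unop < a := by
          by_contra hja
          exact hj ⟨not_lt.mp hja, (leOfHom f.unop).trans hi.2⟩
        rw [hv _ hja, smul_zero, smul_zero]
    · rw [indicatorSubmodule.eq_zero x hi, zero_smul, map_zero, ite_self, zero_smul]

variable {X v}

lemma intervalModule.mono_lift {a : ι} (hv : ∀ i < a, orbit X v i = 0)
    (ha : orbit X v a ≠ 0) : Mono (lift X v a hv) := by
  refine @NatTrans.mono_of_mono_app _ _ _ _ _ _ _ fun i => ?_
  rw [ModuleCat.mono_iff_injective, ← LinearMap.ker_eq_bot (f := ((lift X v a hv).app i).hom),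
    LinearMap.ker_eq_bot']
  intro x hx
  by_cases hi : i.unop ∈ Icc a b
  · have hne : orbit X v i.unop ≠ 0 := orbit_ne_zero_of_le hi.1 hi.2 ha
    exact Subtype.ext ((smul_eq_zero.mp hx).resolve_right hne)
  · exact Subtype.ext (indicatorSubmodule.eq_zero x hi)

lemma exists_mono_intervalModule [WellFoundedLT ι] {X : ιᵒᵖ ⥤ ModuleCat.{u} K} {a b : ι}
    {v : X.obj (op b)} (ha : orbit X v a ≠ 0) :
    ∃ a₀ ≤ a, ∃ φ : intervalModule K (Icc a₀ b) ⟶ X, Mono φ ∧ orbit X v a₀ ≠ 0 ∧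
      ∀ x, φ.app (op b) x = x.1 • v := by
  set a₀ := wellFounded_lt.min {i | orbit X v i ≠ 0} ⟨a, ha⟩
  have ha₀ : orbit X v a₀ ≠ 0 := wellFounded_lt.min_mem {i | orbit X v i ≠ 0} ⟨a, ha⟩
  have hv₀ : ∀ i < a₀, orbit X v i = 0 := fun i hi =>
    not_not.mp (WellFounded.notMem_of_lt_min hi)
  refine ⟨a₀, wellFounded_lt.min_le ha, intervalModule.lift X v a₀ hv₀,
    intervalModule.mono_lift hv₀ ha₀, ha₀, fun x => ?_⟩
  change x.1 • orbit X v b = x.1 • v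
  rw [orbit_self]

lemma exists_epi_intervalModule {a' a b : ι} (h : a' ≤ a) (hab : a ≤ b) :
    ∃ φ : intervalModule K (Icc a' b) ⟶ intervalModule K (Icc a b), Epi φ := by
  let g : (intervalModule K (Icc a b)).obj (op b) := ⟨1, fun h => (h ⟨hab, le_rfl⟩).elim⟩
  have hg_mem : ∀ i ∈ Icc a b, (orbit _ g i).1 = 1 := fun i hi => by
    rw [orbit_of_le hi.2, intervalModule_map_apply, if_pos hi]
  have hv : ∀ i < a', orbit _ g i = 0 := fun i hi => by
    have hi' : i ∉ Icc a b := fun h' => (hi.trans_le h).not_ge h'.1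
    by_cases hib : i ≤ b
    · exact Subtype.ext (by rw [orbit_of_le hib, intervalModule_map_apply, if_neg hi']; rfl)
    · exact orbit_of_not_le hib
  refine ⟨intervalModule.lift _ g a' hv, @NatTrans.epi_of_epi_app _ _ _ _ _ _ _ fun i => ?_⟩
  rw [ModuleCat.epi_iff_surjective]
  intro y
  by_cases hi : i.unop ∈ Icc a b
  · refine ⟨⟨y.1, fun h' => (h' ⟨h.trans hi.1, hi.2⟩).elim⟩, Subtype.ext ?_⟩
    change y.1 * (orbit _ g i.unop).1 = y.1
    rw [hg_mem _ hi, mul_one]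
  · exact ⟨0, Subtype.ext (by rw [map_zero, indicatorSubmodule.eq_zero y hi]; rfl)⟩

end Lift

namespace CategoryTheory

variable {C D : Type*} [Category C] [Category D] {X Y : C ⥤ D} {i j : C} (f : i ⟶ j)

lemma NatTrans.map_eq_zero_of_mono_app [HasZeroMorphisms D] (m : X ⟶ Y) [Mono (m.app j)]
    (h : Y.map f = 0) : X.map f = 0 := by
  rw [← cancel_mono (m.app j), zero_comp, m.naturality, h, comp_zero]

lemma NatTrans.map_eq_zero_of_epi_app [HasZeroMorphisms D] (m : X ⟶ Y) [Epi (m.app i)]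
    (h : X.map f = 0) : Y.map f = 0 := by
  rw [← cancel_epi (m.app i), comp_zero, ← m.naturality, h, zero_comp]

lemma Limits.biprod_map_eq_zero [Preadditive D] [HasBinaryBiproduct X Y] (hX : X.map f = 0)
    (hY : Y.map f = 0) : (X ⊞ Y).map f = 0 := by
  rw [← Category.comp_id ((X ⊞ Y).map f), ← NatTrans.id_app, ← biprod.total, NatTrans.app_add,
    Preadditive.comp_add, NatTrans.comp_app, NatTrans.comp_app, ← Category.assoc,
    ← Category.assoc, (biprod.fst : X ⊞ Y ⟶ X).naturality, (biprod.snd : X ⊞ Y ⟶ Y).naturality,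
    hX, hY, comp_zero, comp_zero, zero_comp, zero_comp, add_zero]

end CategoryTheory

structure IsIntervalIdeal {ι : Type*} [Preorder ι] (T : Set (ι × ι)) : Prop where
  le_of_mem : ∀ p ∈ T, p.1 ≤ p.2
  mem_of_le : ∀ a b c d, (a, b) ∈ T → a ≤ c → c ≤ d → d ≤ b → (c, d) ∈ T

section Classes

open Opposite Set

def intervalRep (s : Set (Fin n)) [s.OrdConnected] : FinDimRep n :=
  ⟨intervalModule F2 s, fun _ => inferInstanceAs (FiniteDimensional F2 (indicatorSubmodule F2 _))⟩

lemma isZero_intervalRep_empty : IsZero (intervalRep (n := n) ∅).1 :=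
  Functor.isZero _ fun _ =>
    @ModuleCat.isZero_of_subsingleton _ _ _
      ⟨fun x y => Subtype.ext ((indicatorSubmodule.eq_zero x id).trans
        (indicatorSubmodule.eq_zero y id).symm)⟩

def FinDimRep.biprod (X Y : FinDimRep n) : FinDimRep n :=
  ⟨X.1 ⊞ Y.1, fun i => by
    let ev := (evaluation (Fin n)ᵒᵖ (ModuleCat.{0} F2)).obj i
    have : FiniteDimensional F2 (ev.obj X.1) := X.2 i
    have : FiniteDimensional F2 (ev.obj Y.1) := Y.2 i
    have := preservesBinaryBiproduct_of_preservesBinaryProduct ev (X := X.1) (Y := Y.1)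
    exact (ev.mapBiprod X.1 Y.1 ≪≫ ModuleCat.biprodIsoProd _ _).toLinearEquiv.symm
      |>.finiteDimensional⟩

variable {S : Set (FinDimRep n)} {T : Set (Fin n × Fin n)}

lemma intervalRep_mem_of_map_ne_zero (hSub : SubClosed S) (hQuot : QuotClosed S)
    {X : FinDimRep n} (hX : X ∈ S) {a b : Fin n} (hab : a ≤ b)
    (h : X.1.map (homOfLE hab).op ≠ 0) : intervalRep (Icc a b) ∈ S := by
  obtain ⟨v, hv⟩ : ∃ v, X.1.map (homOfLE hab).op v ≠ 0 := by
    by_contra! h'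
    exact h (ModuleCat.hom_ext (LinearMap.ext h'))
  obtain ⟨a₀, ha₀, φ, hφ, -, -⟩ := exists_mono_intervalModule (X := X.1) (v := v)
    (by rwa [orbit_of_le hab])
  exact hQuot (intervalRep (Icc a₀ b)) _ (hSub _ X hX ⟨φ, hφ⟩) (exists_epi_intervalModule ha₀ hab)

def idealOfClass (S : Set (FinDimRep n)) : Set (Fin n × Fin n) :=
  {p | p.1 ≤ p.2 ∧ intervalRep (Icc p.1 p.2) ∈ S}

def classOfIdeal (T : Set (Fin n × Fin n)) : Set (FinDimRep n) :=
  {X | ∀ a b (hab : a ≤ b), (a, b) ∉ T → X.1.map (homOfLE hab).op = 0}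

lemma exists_cover_of_mem_classOfIdeal (hZero : ContainsZero S) (hSum : SumClosed S)
    {X : FinDimRep n} (hX : X ∈ classOfIdeal (idealOfClass S))
    (s : Finset (Σ i, X.1.obj i)) :
    ∃ W ∈ S, ∃ g : W.1 ⟶ X.1, ∀ p ∈ s, ∃ w, g.app p.1 w = p.2 := by
  classical
  induction s using Finset.induction_on with
  | empty => exact ⟨_, hZero _ isZero_intervalRep_empty, 0, by simp⟩
  | insert p s _ ih =>
    obtain ⟨W, hW, g, hg⟩ := ih
    obtain ⟨⟨b⟩, v⟩ := p
    by_cases hv : v = 0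
    · refine ⟨W, hW, g, fun q hq => ?_⟩
      rcases Finset.mem_insert.mp hq with rfl | hq
      · exact ⟨0, hv ▸ map_zero _⟩
      · exact hg q hq
    obtain ⟨a, hab, φ, -, ha, hφ⟩ := exists_mono_intervalModule (a := b) (v := v)
      (by rwa [orbit_self])
    have hmem : intervalRep (Icc a b) ∈ S := by
      by_contra h
      rw [orbit_of_le hab, hX a b hab (fun h' => h h'.2)] at ha
      exact ha rfl
    refine ⟨W.biprod (intervalRep (Icc a b)), hSum _ _ _ hW hmem ⟨Iso.refl _⟩,
      biprod.desc g φ, fun q hq => ?_⟩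
    rcases Finset.mem_insert.mp hq with rfl | hq
    · exact ⟨(biprod.inr : _ ⟶ W.1 ⊞ _).app (op b) ⟨1, fun h => (h ⟨hab, le_rfl⟩).elim⟩,
        (ConcreteCategory.congr_hom (congr_app (biprod.inr_desc g φ) (op b)) _).trans
          ((hφ _).trans (one_smul _ _))⟩
    · obtain ⟨w, hw⟩ := hg q hq
      exact ⟨(biprod.inl : _ ⟶ W.1 ⊞ (intervalRep (Icc a b)).1).app q.1 w,
        (ConcreteCategory.congr_hom (congr_app (biprod.inl_desc g φ) q.1) w).trans hw⟩

lemma mem_of_mem_classOfIdeal (hZero : ContainsZero S) (hSum : SumClosed S)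
    (hQuot : QuotClosed S) {X : FinDimRep n} (hX : X ∈ classOfIdeal (idealOfClass S)) : X ∈ S := by
  choose t ht using fun i => Module.finite_def.mp (X.2 i)
  obtain ⟨W, hW, g, hg⟩ := exists_cover_of_mem_classOfIdeal hZero hSum hX (Finset.univ.sigma t)
  refine hQuot W X hW ⟨g, @NatTrans.epi_of_epi_app _ _ _ _ _ _ _ fun i => ?_⟩
  rw [ModuleCat.epi_iff_surjective, ← LinearMap.range_eq_top, eq_top_iff, ← ht i,
    Submodule.span_le]
  intro v hv
  exact hg ⟨i, v⟩ (Finset.mem_sigma.mpr ⟨Finset.mem_univ _, hv⟩)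

lemma classOfIdeal_closed (T : Set (Fin n × Fin n)) :
    IsoClosed (classOfIdeal T) ∧ ContainsZero (classOfIdeal T) ∧ SumClosed (classOfIdeal T) ∧
      SubClosed (classOfIdeal T) ∧ QuotClosed (classOfIdeal T) := by
  refine ⟨?iso, ?zero, ?sum, ?sub, ?quot⟩
  case iso =>
    rintro X Y ⟨e⟩ hX a b hab hT
    exact NatTrans.map_eq_zero_of_epi_app _ e.hom (hX a b hab hT)
  case zero =>
    intro X hX a b hab _
    exact (hX.obj _).eq_of_tgt _ _
  case sum =>
    rintro X Y Z hX hY ⟨e⟩ a b hab hT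
    exact NatTrans.map_eq_zero_of_epi_app _ e.inv
      (biprod_map_eq_zero _ (hX a b hab hT) (hY a b hab hT))
  case sub =>
    rintro X Y hY ⟨m, hm⟩ a b hab hT
    exact NatTrans.map_eq_zero_of_mono_app _ m (hY a b hab hT)
  case quot =>
    rintro X Y hX ⟨m, hm⟩ a b hab hT
    exact NatTrans.map_eq_zero_of_epi_app _ m (hX a b hab hT)

lemma isIntervalIdeal_idealOfClass (hSub : SubClosed S) (hQuot : QuotClosed S) :
    IsIntervalIdeal (idealOfClass S) where
  le_of_mem _ hp := hp.1
  mem_of_le _ _ _ _ hab hac hcd hdb := ⟨hcd, intervalRep_mem_of_map_ne_zero hSub hQuot hab.2 hcd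
    ((intervalModule_Icc_map_eq_zero_iff hcd).not.mpr (not_not.mpr ⟨hac, hdb⟩))⟩

lemma classOfIdeal_idealOfClass (hZero : ContainsZero S) (hSum : SumClosed S)
    (hSub : SubClosed S) (hQuot : QuotClosed S) : classOfIdeal (idealOfClass S) = S := by
  refine Set.Subset.antisymm (fun X hX => mem_of_mem_classOfIdeal hZero hSum hQuot hX)
    fun X hX a b hab hT => ?_
  by_contra h
  exact hT ⟨hab, intervalRep_mem_of_map_ne_zero hSub hQuot hX hab h⟩

lemma idealOfClass_classOfIdeal (hT : IsIntervalIdeal T) : idealOfClass (classOfIdeal T) = T := by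
  ext ⟨a, b⟩
  refine ⟨fun ⟨hab, h⟩ => ?_, fun h => ⟨hT.le_of_mem _ h, fun c d hcd hcdT => ?_⟩⟩
  · by_contra habT
    exact (intervalModule_Icc_map_eq_zero_iff hab).mp (h a b hab habT) ⟨le_rfl, le_rfl⟩
  · exact (intervalModule_Icc_map_eq_zero_iff hcd).mpr
      fun ⟨hac, hdb⟩ => hcdT (hT.mem_of_le a b c d h hac hcd hdb)

def closedClassEquivIntervalIdeal :
    {S : Set (FinDimRep n) //
      IsoClosed S ∧ ContainsZero S ∧ SumClosed S ∧ SubClosed S ∧ QuotClosed S} ≃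
    {T : Set (Fin n × Fin n) // IsIntervalIdeal T} where
  toFun S := ⟨idealOfClass S.1, isIntervalIdeal_idealOfClass S.2.2.2.2.1 S.2.2.2.2.2⟩
  invFun T := ⟨classOfIdeal T.1, classOfIdeal_closed T.1⟩
  left_inv S := Subtype.ext (classOfIdeal_idealOfClass S.2.2.1 S.2.2.2.1 S.2.2.2.2.1 S.2.2.2.2.2)
  right_inv T := Subtype.ext (idealOfClass_classOfIdeal T.2)

end Classes

section Counting

open Finset PowerSeries

def stepSeqs : (n : ℕ) → ℕ → Finset (Fin n → ℕ)
  | 0, _ => {Fin.elim0}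
  | n + 1, h => ((range (h + 2)).sigma fun x => stepSeqs n x).map
      ⟨fun p => Fin.cons p.1 p.2, fun p q hpq => by
        obtain ⟨h₁, h₂⟩ := Fin.cons_injective2.eq_iff.mp hpq
        exact Sigma.ext h₁ (heq_of_eq h₂)⟩

lemma mem_stepSeqs_succ {n h : ℕ} {f : Fin (n + 1) → ℕ} :
    f ∈ stepSeqs (n + 1) h ↔ f 0 ≤ h + 1 ∧ Fin.tail f ∈ stepSeqs n (f 0) := by
  simp only [stepSeqs, mem_map, mem_sigma, mem_range]
  constructor
  · rintro ⟨⟨x, g⟩, ⟨hx, hg⟩, rfl⟩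
    exact ⟨Nat.le_of_lt_succ hx, hg⟩
  · rintro ⟨h₀, ht⟩
    exact ⟨⟨f 0, Fin.tail f⟩, ⟨Nat.lt_succ_of_le h₀, ht⟩, Fin.cons_self_tail f⟩

lemma mem_stepSeqs_iff {n h : ℕ} {f : Fin n → ℕ} :
    f ∈ stepSeqs n h ↔ ∀ i : Fin n, f i ≤ (Fin.cons h f : Fin (n + 1) → ℕ) i.castSucc + 1 := by
  induction n generalizing h with
  | zero => simp [stepSeqs, Subsingleton.elim f Fin.elim0]
  | succ n ih =>
    rw [mem_stepSeqs_succ, ih, Fin.forall_fin_succ]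
    simp [Fin.tail]

lemma catalanSeries_pow_eq_one_add_X_mul (k : ℕ) :
    catalanSeries ^ k = 1 + X * ∑ j ∈ range k, catalanSeries ^ (j + 2) := by
  induction k with
  | zero => simp
  | succ k ih =>
    calc catalanSeries ^ (k + 1) = catalanSeries ^ k * (catalanSeries ^ 2 * X + 1) := by
          rw [catalanSeries_sq_mul_X_add_one, pow_succ]
      _ = catalanSeries ^ k + X * catalanSeries ^ (k + 2) := by ring
      _ = _ := by rw [ih, sum_range_succ]; ring

lemma card_stepSeqs (n h : ℕ) : (stepSeqs n h).card = coeff n (catalanSeries ^ (h + 2)) := by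
  induction n generalizing h with
  | zero => simp [stepSeqs]
  | succ n ih =>
    rw [stepSeqs, card_map, card_sigma, catalanSeries_pow_eq_one_add_X_mul, map_add,
      coeff_succ_X_mul, map_sum, coeff_one, if_neg n.succ_ne_zero, zero_add]
    exact sum_congr rfl fun x _ => ih x

lemma coeff_catalanSeries_sq (n : ℕ) : coeff n (catalanSeries ^ 2) = catalan (n + 1) := by
  have h := congrArg (coeff (n + 1)) catalanSeries_sq_mul_X_add_one
  rwa [map_add, coeff_succ_mul_X, coeff_one, if_neg n.succ_ne_zero, add_zero,
    catalanSeries_coeff] at h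

end Counting

section IntervalIdeals

open Set

variable {T : Set (Fin n × Fin n)} {f : Fin n → ℕ}

lemma le_add_of_mem_stepSeqs {h : ℕ} (hf : f ∈ stepSeqs n h) {i j : Fin (n + 1)} (hij : i ≤ j) :
    (Fin.cons h f : Fin (n + 1) → ℕ) j ≤ (Fin.cons h f : Fin (n + 1) → ℕ) i + (j - i) := by
  have hmono : Monotone fun k : Fin (n + 1) => (k : ℤ) - (Fin.cons h f : Fin (n + 1) → ℕ) k :=
    Fin.monotone_iff_le_succ.mpr fun k => by
      have := mem_stepSeqs_iff.mp hf k
      simp only [Fin.val_castSucc, Fin.val_succ, Fin.cons_succ]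
      omega
  have h₁ := hmono hij
  have h₂ : (i : ℕ) ≤ j := hij
  simp only at h₁
  omega

def columnCount (T : Set (Fin n × Fin n)) (b : Fin n) : ℕ :=
  {a | (a, b) ∈ T}.ncard

def idealOfColumnCounts (f : Fin n → ℕ) : Set (Fin n × Fin n) :=
  {p | p.1 ≤ p.2 ∧ (p.2 : ℕ) < p.1 + f p.2}

lemma ncard_column (b : Fin n) {m : ℕ} (hm : m ≤ b + 1) :
    {a : Fin n | a ≤ b ∧ (b : ℕ) < a + m}.ncard = m := by
  have himage : Fin.val '' {a : Fin n | a ≤ b ∧ (b : ℕ) < a + m} = Ico (b + 1 - m) (b + 1) := by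
    ext x
    simp only [mem_image, mem_Ico, Fin.le_def]
    constructor
    · rintro ⟨a, ⟨h₁, h₂⟩, rfl⟩
      omega
    · intro hx
      exact ⟨⟨x, by omega⟩, ⟨by simp only; omega, by simp only; omega⟩, rfl⟩
  rw [← ncard_image_of_injective _ Fin.val_injective, himage, ncard_Ico_nat]
  omega

lemma columnCount_mem_stepSeqs (hT : IsIntervalIdeal T) : columnCount T ∈ stepSeqs n 0 := by
  rw [mem_stepSeqs_iff]
  intro i
  have hle : ∀ a ∈ {a | (a, i) ∈ T}, a ≤ i := fun a ha => hT.le_of_mem _ ha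
  rcases i.castSucc.eq_zero_or_eq_succ with h₀ | ⟨j, hj⟩
  · rw [h₀, Fin.cons_zero]
    have hi : (i : ℕ) = 0 := congrArg Fin.val h₀
    have hsub : {a | (a, i) ∈ T} ⊆ {i} := fun a ha => by
      have := Fin.le_def.mp (hle a ha)
      exact Fin.ext (by omega)
    exact (ncard_le_ncard hsub).trans (ncard_singleton i).le
  · rw [hj, Fin.cons_succ]
    have hji : (j : ℕ) + 1 = i := (congrArg Fin.val hj).symm
    have hsub : {a | (a, i) ∈ T} ⊆ insert i {a | (a, j) ∈ T} := fun a ha => by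
      rcases eq_or_ne a i with rfl | hai
      · exact mem_insert _ _
      · have hai' : (a : ℕ) < i := lt_of_le_of_ne (hle a ha) (Fin.val_ne_of_ne hai)
        exact mem_insert_of_mem _ (hT.mem_of_le a i a j ha le_rfl
          (Fin.le_def.mpr (by omega)) (Fin.le_def.mpr (by omega)))
    exact (ncard_le_ncard hsub).trans (ncard_insert_le _ _)

lemma isIntervalIdeal_idealOfColumnCounts (hf : f ∈ stepSeqs n 0) :
    IsIntervalIdeal (idealOfColumnCounts f) where
  le_of_mem _ hp := hp.1
  mem_of_le a b c d hab hac hcd hdb := by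
    have h := le_add_of_mem_stepSeqs hf (Fin.succ_le_succ_iff.mpr hdb)
    simp only [Fin.cons_succ, Fin.val_succ] at h
    have hb : (b : ℕ) < a + f b := hab.2
    have := Fin.le_def.mp hac
    have := Fin.le_def.mp hdb
    exact ⟨hcd, show (d : ℕ) < c + f d by omega⟩

lemma le_succ_of_mem_stepSeqs (hf : f ∈ stepSeqs n 0) (b : Fin n) : f b ≤ b + 1 := by
  have h := le_add_of_mem_stepSeqs hf (Fin.zero_le b.succ)
  simpa using h

lemma columnCount_idealOfColumnCounts (hf : f ∈ stepSeqs n 0) :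
    columnCount (idealOfColumnCounts f) = f :=
  funext fun b => ncard_column b (le_succ_of_mem_stepSeqs hf b)

lemma idealOfColumnCounts_columnCount (hT : IsIntervalIdeal T) :
    idealOfColumnCounts (columnCount T) = T := by
  ext ⟨a, b⟩
  refine ⟨fun ⟨hab, hlt⟩ => ?_, fun h => ⟨hT.le_of_mem _ h, ?_⟩⟩
  · change a ≤ b at hab
    change (b : ℕ) < a + columnCount T b at hlt
    by_contra habT
    have hsub : {x | (x, b) ∈ T} ⊆ {x : Fin n | x ≤ b ∧ (b : ℕ) < x + (b - a)} := fun x hx => by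
      have hxb := hT.le_of_mem _ hx
      have hax : a < x := lt_of_not_ge fun hxa => habT (hT.mem_of_le x b a b hx hxa hab le_rfl)
      have := Fin.lt_def.mp hax
      have := Fin.le_def.mp hxb
      exact ⟨hxb, by omega⟩
    have hcard := (ncard_le_ncard hsub).trans (ncard_column b (m := b - a) (by omega)).le
    have := Fin.le_def.mp hab
    unfold columnCount at hlt
    omega
  · have hab : (a : ℕ) ≤ b := Fin.le_def.mp (hT.le_of_mem _ h)
    have hsub : {x : Fin n | x ≤ b ∧ (b : ℕ) < x + (b - a + 1)} ⊆ {x | (x, b) ∈ T} :=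
      fun x ⟨hxb, hx⟩ => hT.mem_of_le a b x b h (Fin.le_def.mpr (by omega)) hxb le_rfl
    have hcard := (ncard_column b (m := b - a + 1) (by omega)).ge.trans (ncard_le_ncard hsub)
    show (b : ℕ) < a + columnCount T b
    unfold columnCount
    omega

def intervalIdealEquivStepSeqs :
    {T : Set (Fin n × Fin n) // IsIntervalIdeal T} ≃ stepSeqs n 0 where
  toFun T := ⟨columnCount T.1, columnCount_mem_stepSeqs T.2⟩
  invFun f := ⟨idealOfColumnCounts f.1, isIntervalIdeal_idealOfColumnCounts f.2⟩
  left_inv T := Subtype.ext (idealOfColumnCounts_columnCount T.2)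
  right_inv f := Subtype.ext (columnCount_idealOfColumnCounts f.2)

lemma card_intervalIdeals :
    Nat.card {T : Set (Fin n × Fin n) // IsIntervalIdeal T} = catalan (n + 1) := by
  rw [Nat.card_congr intervalIdealEquivStepSeqs, Nat.card_eq_finsetCard, card_stepSeqs,
    coeff_catalanSeries_sq]

end IntervalIdeals

theorem card_sub_and_quot_closed_subcategories_general (n : ℕ) :
    Nat.card {S : Set (FinDimRep n) //
      IsoClosed S ∧ ContainsZero S ∧ SumClosed S ∧ SubClosed S ∧ QuotClosed S} =
      catalan (n + 1) := by
  rw [Nat.card_congr closedClassEquivIntervalIdeal, card_intervalIdeals]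

theorem card_sub_and_quot_closed_subcategories (n : ℕ) (hn : 1 ≤ n) :
    Nat.card {S : Set (FinDimRep n) //
      IsoClosed S ∧ ContainsZero S ∧ SumClosed S ∧ SubClosed S ∧ QuotClosed S} =
      catalan (n + 1) :=
  card_sub_and_quot_closed_subcategories_general n
end
end

section
/- Let P be a partially ordered set, F a field, and x ∈ P. The assignments I ↦ Σ_{y ∈ I} h_y (the subfunctor of h_x generated by the images of h_y → h_x for y ∈ I) and F' ↦ { y ∈ P : F'(y) ≠ 0 } are mutually inverse, inclusion-preserving bijections between the lattice of lower sets of the principal lower set ↓x = { y ∈ P : y ≤ x } and the lattice of subfunctors of h_x in the category of functors Pᵒᵖ → (F-vector spaces). In particular, the lattice of subfunctors of h_x is distributive. -/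
open CategoryTheory CategoryTheory.Limits

noncomputable section

open Classical in
/-- `dimP x y = 1` if `y ≤ x`, and `0` otherwise. -/
def dimP {P : Type} [PartialOrder P] (x y : P) : ℕ := if y ≤ x then 1 else 0

lemma dimP_eq_one_iff {P : Type} [PartialOrder P] {x y : P} :
    dimP x y = 1 ↔ y ≤ x := by
  unfold dimP; split <;> simp_all

lemma dimP_le_one {P : Type} [PartialOrder P] (x y : P) : dimP x y ≤ 1 := by
  unfold dimP; split <;> omega

variable (P : Type) [PartialOrder P] (F : Type) [Field F]

/-- The structure maps of the representable representation `h_x`. -/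
def hMap (x s t : P) : (Fin (dimP x s) → F) →ₗ[F] (Fin (dimP x t) → F) where
  toFun f _ := if h : dimP x s = 1 then f ⟨0, by omega⟩ else 0
  map_add' f g := by
    funext k
    by_cases h : dimP x s = 1 <;> simp [h]
  map_smul' c f := by
    funext k
    by_cases h : dimP x s = 1 <;> simp [h]

lemma hMap_apply (x s t : P) (f : Fin (dimP x s) → F) (k : Fin (dimP x t)) :
    hMap P F x s t f k = if h : dimP x s = 1 then f ⟨0, by omega⟩ else 0 := rfl

/-- The representable representation `h_x : Pᵒᵖ ⥤ ModuleCat F`, with value `F`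
at `y` if `y ≤ x` and `0` otherwise, and identity structure maps whenever both
values are `F`. -/
def hRep (x : P) : Pᵒᵖ ⥤ ModuleCat.{0} F where
  obj y := ModuleCat.of F (Fin (dimP x y.unop) → F)
  map {y z} _ := ModuleCat.ofHom (hMap P F x y.unop z.unop)
  map_id y := by
    refine ModuleCat.hom_ext (LinearMap.ext fun f => ?_)
    funext k
    show hMap P F x y.unop y.unop f k = f k
    rw [hMap_apply]
    have hk := k.isLt
    have hle := dimP_le_one x y.unop
    have h1 : dimP x y.unop = 1 := by omega
    rw [dif_pos h1]
    congr 1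
    exact Fin.ext (by omega)
  map_comp {i j k} f g := by
    have hij : j.unop ≤ i.unop := (leOfHom f.unop)
    have hjk : k.unop ≤ j.unop := (leOfHom g.unop)
    refine ModuleCat.hom_ext (LinearMap.ext fun v => ?_)
    funext l
    show hMap P F x i.unop k.unop v l =
      hMap P F x j.unop k.unop (hMap P F x i.unop j.unop v) l
    simp only [hMap_apply]
    by_cases hi : dimP x i.unop = 1
    · have hj1 : dimP x j.unop = 1 := by
        rw [dimP_eq_one_iff] at *
        exact le_trans hij hi
      rw [dif_pos hi, dif_pos hj1]
    · rw [dif_neg hi]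
      by_cases hj : dimP x j.unop = 1
      · rw [dif_pos hj]
        try rw [dif_neg hi]
      · rw [dif_neg hj]

/-- A subfunctor of a representation `G : Pᵒᵖ ⥤ ModuleCat F`: a family of
submodules of the values of `G` which is closed under the structure maps. -/
@[ext]
structure Subfunctor {P : Type} [PartialOrder P] {F : Type} [Field F]
    (G : Pᵒᵖ ⥤ ModuleCat.{0} F) where
  toFun : ∀ y : Pᵒᵖ, Submodule F (G.obj y)
  map_le : ∀ {y z : Pᵒᵖ} (f : y ⟶ z), (toFun y).map (G.map f).hom ≤ toFun z

namespace Subfunctor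

variable {P F} {G : Pᵒᵖ ⥤ ModuleCat.{0} F}

instance : PartialOrder (Subfunctor G) where
  le S T := ∀ y, S.toFun y ≤ T.toFun y
  le_refl S y := le_refl _
  le_trans S T U h h' y := le_trans (h y) (h' y)
  le_antisymm S T h h' := by
    ext y v
    exact ⟨fun hv => h y hv, fun hv => h' y hv⟩

/-- The lattice of subfunctors, with pointwise join and meet. -/
instance : Lattice (Subfunctor G) where
  sup S T := ⟨fun y => S.toFun y ⊔ T.toFun y, fun {y z} f => by
    rw [Submodule.map_sup]
    exact sup_le_sup (S.map_le f) (T.map_le f)⟩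
  le_sup_left S T y := le_sup_left
  le_sup_right S T y := le_sup_right
  sup_le S T U h h' y := sup_le (h y) (h' y)
  inf S T := ⟨fun y => S.toFun y ⊓ T.toFun y, fun {y z} f =>
    le_trans (Submodule.map_inf_le _) (inf_le_inf (S.map_le f) (T.map_le f))⟩
  inf_le_left S T y := inf_le_left
  inf_le_right S T y := inf_le_right
  le_inf S T U h h' y := le_inf (h y) (h' y)

end Subfunctor

end

/-!
Each value of `h_x` has dimension at most one, so a subfunctor of `h_x` is determined by the set
of points where it is nonzero. That set is a lower set because the structure maps of `h_x` are
injective between points of `↓x`. Distributivity is then transported from the lattice of lower sets.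
-/

theorem OrderIso.inf_sup_left_of_distribLattice {α β : Type*} [DistribLattice α] [Lattice β]
    (e : α ≃o β) (a b c : β) : a ⊓ (b ⊔ c) = a ⊓ b ⊔ a ⊓ c := by
  apply e.symm.injective
  simp only [e.symm.map_inf, e.symm.map_sup, inf_sup_left]

section Representable

variable {P : Type} [PartialOrder P] {F : Type} [Field F] {x : P}

theorem hRep_obj_subsingleton {y : P} (hy : ¬ y ≤ x) :
    Subsingleton ((hRep P F x).obj (Opposite.op y)) := by
  have hdim : dimP x y = 0 := by simp [dimP, hy]
  change Subsingleton (Fin (dimP x y) → F)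
  rw [hdim]
  infer_instance

theorem hRep_obj_isSimpleOrder {y : P} (hy : y ≤ x) :
    IsSimpleOrder (Submodule F ((hRep P F x).obj (Opposite.op y))) :=
  show IsSimpleOrder (Submodule F (Fin (dimP x y) → F)) from
    is_simple_module_of_finrank_eq_one <|
      (Module.finrank_fin_fun F).trans (dimP_eq_one_iff.mpr hy)

theorem hMap_injective {s t : P} (hs : s ≤ x) (ht : t ≤ x) :
    Function.Injective (hMap P F x s t) := by
  have hs1 := dimP_eq_one_iff.mpr hs
  have ht1 := dimP_eq_one_iff.mpr ht
  intro v w hvw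
  have h0 := congrFun hvw ⟨0, by omega⟩
  rw [hMap_apply, hMap_apply, dif_pos hs1, dif_pos hs1] at h0
  funext k
  rwa [show k = ⟨0, by omega⟩ from Fin.ext (by omega)]

theorem hRep_map_injective {y z : Pᵒᵖ} (f : y ⟶ z) (hy : y.unop ≤ x) :
    Function.Injective ((hRep P F x).map f) :=
  hMap_injective hy ((leOfHom f.unop).trans hy)

end Representable

namespace Subfunctor

variable {P : Type} [PartialOrder P] {F : Type} [Field F] {x : P}

theorem ne_bot_of_map_injective {G : Pᵒᵖ ⥤ ModuleCat.{0} F} (S : Subfunctor G)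
    {y z : Pᵒᵖ} (f : y ⟶ z) (hf : Function.Injective (G.map f)) (hy : S.toFun y ≠ ⊥) :
    S.toFun z ≠ ⊥ := by
  obtain ⟨v, hv, hv0⟩ := Submodule.exists_mem_ne_zero_of_ne_bot hy
  refine Submodule.ne_bot_iff _ |>.mpr ⟨G.map f v, S.map_le f ⟨v, hv, rfl⟩, ?_⟩
  exact (map_ne_zero_iff _ hf).mpr hv0

variable (F) in
open Classical in
/-- The subfunctor `Σ_{y ∈ I} h_y` of `h_x`, which is all of `h_x(y)` for `y ∈ I` and `0` elsewhere. -/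
noncomputable def ofLowerSet (I : LowerSet {y : P // y ≤ x}) : Subfunctor (hRep P F x) where
  toFun y := if ∃ hy : y.unop ≤ x, ⟨y.unop, hy⟩ ∈ I then ⊤ else ⊥
  map_le {y z} f := by
    split_ifs with hyI hzI
    · exact le_top
    · obtain ⟨hy, hyI⟩ := hyI
      exact absurd ⟨(leOfHom f.unop).trans hy, I.lower (leOfHom f.unop) hyI⟩ hzI
    · exact le_top
    · rw [Submodule.map_bot]

def support (S : Subfunctor (hRep P F x)) : LowerSet {y : P // y ≤ x} where
  carrier := {y | S.toFun (Opposite.op y.1) ≠ ⊥}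
  lower' y _ hzy hy :=
    S.ne_bot_of_map_injective (homOfLE hzy).op (hRep_map_injective _ y.2) hy

theorem mem_support {S : Subfunctor (hRep P F x)} {z : P} (hz : z ≤ x) :
    (⟨z, hz⟩ : {y : P // y ≤ x}) ∈ S.support ↔ S.toFun (Opposite.op z) ≠ ⊥ :=
  Iff.rfl

theorem support_injective : Function.Injective (support (P := P) (F := F) (x := x)) := by
  intro S T hST
  ext1
  funext y
  by_cases hy : y.unop ≤ x
  · have hne : S.toFun y ≠ ⊥ ↔ T.toFun y ≠ ⊥ := by
      simpa only [mem_support] using SetLike.ext_iff.mp hST ⟨y.unop, hy⟩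
    have := hRep_obj_isSimpleOrder (F := F) hy
    rcases eq_bot_or_eq_top (S.toFun y) with hS | hS <;>
      rcases eq_bot_or_eq_top (T.toFun y) with hT | hT <;> simp_all
  · have := hRep_obj_subsingleton (F := F) hy
    exact Subsingleton.elim _ _

theorem support_ofLowerSet (I : LowerSet {y : P // y ≤ x}) : (ofLowerSet F I).support = I := by
  ext ⟨z, hz⟩
  have := hRep_obj_isSimpleOrder (F := F) hz
  rw [SetLike.mem_coe, mem_support, ofLowerSet]
  dsimp only
  split_ifs with h
  · obtain ⟨_, hzI⟩ := h
    exact iff_of_true top_ne_bot hzI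
  · exact iff_of_false (not_not.mpr rfl) fun hzI => h ⟨hz, hzI⟩

theorem ofLowerSet_support (S : Subfunctor (hRep P F x)) : ofLowerSet F S.support = S :=
  support_injective (support_ofLowerSet _)

theorem ofLowerSet_mono : Monotone (ofLowerSet (x := x) F) := by
  intro I J hIJ y
  simp only [ofLowerSet]
  split_ifs with hI hJ
  · exact le_rfl
  · obtain ⟨hy, hyI⟩ := hI
    exact absurd ⟨hy, hIJ hyI⟩ hJ
  · exact bot_le
  · exact le_rfl

theorem support_mono : Monotone (support (P := P) (F := F) (x := x)) :=
  fun _ _ hST _ hy => ne_bot_of_le_ne_bot hy (hST _)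

variable (P F x) in
noncomputable def lowerSetOrderIso : LowerSet {y : P // y ≤ x} ≃o Subfunctor (hRep P F x) :=
  Equiv.toOrderIso ⟨ofLowerSet F, support, support_ofLowerSet, ofLowerSet_support⟩
    ofLowerSet_mono support_mono

end Subfunctor

theorem lowerSets_order_iso_subfunctors
    (P : Type) [PartialOrder P] (F : Type) [Field F] (x : P) :
    ∃ e : LowerSet {y : P // y ≤ x} ≃o Subfunctor (hRep P F x),
      (∀ (I : LowerSet {y : P // y ≤ x}) (z : P) (hz : z ≤ x),
          ((⟨z, hz⟩ : {y : P // y ≤ x}) ∈ I ↔ (e I).toFun (Opposite.op z) ≠ ⊥)) ∧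
      (∀ (S : Subfunctor (hRep P F x)) (z : P) (hz : z ≤ x),
          ((⟨z, hz⟩ : {y : P // y ≤ x}) ∈ e.symm S ↔ S.toFun (Opposite.op z) ≠ ⊥)) ∧
      (∀ S T U : Subfunctor (hRep P F x), S ⊓ (T ⊔ U) = (S ⊓ T) ⊔ (S ⊓ U)) := by
  let e := Subfunctor.lowerSetOrderIso P F x
  refine ⟨e, fun I z hz => ?_, fun S z hz => Subfunctor.mem_support hz,
    e.inf_sup_left_of_distribLattice⟩
  conv_lhs => rw [← Subfunctor.support_ofLowerSet (F := F) I]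
  exact Subfunctor.mem_support hz
end

section
/- Let P be a partially ordered set. Then P is coherent if and only if for every x ∈ P the compact elements of the complete lattice of lower sets of ↓x = { y ∈ P : y ≤ x } are closed under binary meets (intersections). -/
/-! The compact lower sets are exactly the finitely generated ones, `↓a₁ ∪ ⋯ ∪ ↓aₙ`. Since lower
sets form a distributive lattice, the meet of two of them is the union of the pairwise meets
`↓a ∩ ↓b`, so compact lower sets are closed under meets iff every `↓a ∩ ↓b` is finitely
generated. For `a, b ≤ x` that is exactly coherence at `x`, and `↓a ∩ ↓b` is the same set whether
computed in `↓x` or in `P`. -/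

open CompleteLattice

def CoherentPoset (P : Type*) [PartialOrder P] : Prop :=
  ∀ x y y' : P, y ≤ x → y' ≤ x →
    ∃ Z : Finset P, (∀ z ∈ Z, z ≤ y ∧ z ≤ y') ∧
      ∀ z : P, z ≤ y → z ≤ y' → ∃ z' ∈ Z, z ≤ z'

namespace LowerSet

variable {α : Type*} [Preorder α]

theorem isCompactElement_Iic (a : α) : IsCompactElement (Iic a) := by
  rw [isCompactElement_iff_exists_le_sSup_of_le_sSup]
  intro S hS
  obtain ⟨I, hI, haI⟩ := mem_sSup_iff.mp (hS (mem_Iic_iff.mpr le_rfl))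
  exact ⟨{I}, by simpa, by simpa [Iic_le] using haI⟩

theorem mem_finsetSup_Iic {F : Finset α} {w : α} : w ∈ F.sup Iic ↔ ∃ a ∈ F, w ≤ a := by
  simp [Finset.sup_eq_iSup, mem_iSup_iff]

theorem eq_finsetSup_Iic_iff {I : LowerSet α} {F : Finset α} :
    I = F.sup Iic ↔ (∀ a ∈ F, a ∈ I) ∧ ∀ w ∈ I, ∃ a ∈ F, w ≤ a := by
  simp only [LowerSet.ext_iff, Set.ext_iff, SetLike.mem_coe, mem_finsetSup_Iic]
  constructor
  · intro h
    exact ⟨fun a ha => (h a).mpr ⟨a, ha, le_rfl⟩, fun w hw => (h w).mp hw⟩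
  · rintro ⟨hF, hI⟩ w
    exact ⟨hI w, fun ⟨a, ha, hwa⟩ => I.lower hwa (hF a ha)⟩

theorem isCompactElement_iff_exists_finset {I : LowerSet α} :
    IsCompactElement I ↔ ∃ F : Finset α, I = F.sup Iic := by
  refine ⟨fun hI => ?_, ?_⟩
  · obtain ⟨s, hs⟩ := hI.exists_finset_of_le_iSup _ (fun a : I => Iic (a : α))
      fun w hw => mem_iSup_iff.mpr ⟨⟨w, hw⟩, mem_Iic_iff.mpr le_rfl⟩
    refine ⟨s.map (.subtype _), eq_finsetSup_Iic_iff.mpr ⟨?_, fun w hw => ?_⟩⟩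
    · rintro _ ha
      obtain ⟨a, -, rfl⟩ := Finset.mem_map.mp ha
      exact a.2
    · obtain ⟨a, ha, hwa⟩ : ∃ a ∈ s, w ≤ a := by simpa [mem_iSup_iff] using hs hw
      exact ⟨a, Finset.mem_map_of_mem _ ha, hwa⟩
  · rintro ⟨F, rfl⟩
    exact isCompactElement_finsetSup F fun a _ => isCompactElement_Iic a

theorem isCompactElement_Iic_inf_Iic_iff {a b : α} :
    IsCompactElement (Iic a ⊓ Iic b) ↔ ∃ Z : Finset α, (∀ z ∈ Z, z ≤ a ∧ z ≤ b) ∧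
      ∀ z, z ≤ a → z ≤ b → ∃ z' ∈ Z, z ≤ z' := by
  simp only [isCompactElement_iff_exists_finset, eq_finsetSup_Iic_iff, mem_inf_iff, mem_Iic_iff,
    and_imp]

theorem isCompactElement_inf_iff :
    (∀ I J : LowerSet α, IsCompactElement I → IsCompactElement J → IsCompactElement (I ⊓ J)) ↔
      ∀ a b : α, IsCompactElement (Iic a ⊓ Iic b) := by
  refine ⟨fun h a b => h _ _ (isCompactElement_Iic a) (isCompactElement_Iic b),
    fun h I J hI hJ => ?_⟩
  obtain ⟨F, rfl⟩ := isCompactElement_iff_exists_finset.mp hI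
  obtain ⟨G, rfl⟩ := isCompactElement_iff_exists_finset.mp hJ
  rw [Finset.sup_inf_sup]
  exact isCompactElement_finsetSup _ fun p _ => h p.1 p.2

theorem isCompactElement_Iic_inf_Iic_subtype_iff {x : α} (a b : {y : α // y ≤ x}) :
    IsCompactElement (Iic a ⊓ Iic b) ↔ IsCompactElement (Iic (a : α) ⊓ Iic (b : α)) := by
  classical
  simp only [isCompactElement_Iic_inf_Iic_iff]
  constructor
  · rintro ⟨Z, hZ, hcover⟩
    refine ⟨Z.map (.subtype _), fun z hz => ?_, fun z hza hzb => ?_⟩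
    · obtain ⟨z, hzZ, rfl⟩ := Finset.mem_map.mp hz
      exact hZ z hzZ
    · obtain ⟨z', hz', hzz'⟩ := hcover ⟨z, hza.trans a.2⟩ hza hzb
      exact ⟨z', Finset.mem_map_of_mem _ hz', hzz'⟩
  · rintro ⟨Z, hZ, hcover⟩
    refine ⟨Z.subtype (· ≤ x), fun z hz => hZ z (Finset.mem_subtype.mp hz), fun z hza hzb => ?_⟩
    obtain ⟨z', hz', hzz'⟩ := hcover z hza hzb
    exact ⟨⟨z', (hZ z' hz').1.trans a.2⟩, Finset.mem_subtype.mpr hz', hzz'⟩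

end LowerSet

theorem coherentPoset_iff_isCompactElement_Iic_inf_Iic (P : Type*) [PartialOrder P] :
    CoherentPoset P ↔ ∀ x y y' : P, y ≤ x → y' ≤ x →
      IsCompactElement (LowerSet.Iic y ⊓ LowerSet.Iic y') := by
  simp only [CoherentPoset, LowerSet.isCompactElement_Iic_inf_Iic_iff]

/-- a poset is coherent iff for every `x` the compact elements of
the complete lattice of lower sets of `↓x` are closed under binary meets. -/
theorem coherent_iff_compacts_closed_under_meet (P : Type*) [PartialOrder P] :
    CoherentPoset P ↔
      ∀ x : P, ∀ I J : LowerSet {y : P // y ≤ x},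
        IsCompactElement I → IsCompactElement J →
          IsCompactElement (I ⊓ J) := by
  simp only [coherentPoset_iff_isCompactElement_Iic_inf_Iic, LowerSet.isCompactElement_inf_iff,
    LowerSet.isCompactElement_Iic_inf_Iic_subtype_iff, Subtype.forall]
  exact ⟨fun h x y hy y' hy' => h x y y' hy hy', fun h x y y' hy hy' => h x y hy y' hy'⟩
end
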